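/- Let μ be a finite Borel measure on T = [-π,π], symmetric about the origin, with dμ = b dλ + dμ_s (μ_s ⊥ λ, b ≥ 0 in L¹(T,λ)). Assume there exist p > 0 and C < ∞ such that λ{t ∈ T : b(t) ≤ δ} ≤ C δ^p for every δ ∈ [0,π]. Then there exists a constant c > 0 (depending only on C and p) such that for every N ≥ 1, the smallest eigenvalue of Σ_N = (μ̂(j-k))_{1≤j,k≤N} is at least c N^{-1/p}. -/

import Mathlib

/-!
For `u ∈ ℝᴺ` the quadratic form `uᵀ Σ_N u` is `∫ |P_u|² dμ` with `P_u(t) = ∑ⱼ uⱼ e^{ijt}`.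
For `μ = λ` this is Parseval's identity `∫ |P_u|² dλ = ‖u‖²`, and pointwise `|P_u|² ≤ N ‖u‖²`.
Discarding `μ_s` and the part of `b dλ` on the level set `{b ≤ δ}` gives
`uᵀ Σ_N u ≥ δ (‖u‖² - N ‖u‖² λ{b ≤ δ}) ≥ δ (1 - N C δ^p) ‖u‖²`,
and `δ ≍ N^{-1/p}` makes the bracket at least `1/2`.
-/

open MeasureTheory ProbabilityTheory Matrix

noncomputable section

/-- Normalized Lebesgue measure `λ` on `T = [-π,π]`, with `λ(T) = 1`. -/
def normLeb1 : Measure ℝ :=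
  (ENNReal.ofReal (2 * Real.pi))⁻¹ • (volume.restrict (Set.Icc (-Real.pi) Real.pi))

/-- Fourier coefficient `μ̂(m) = ∫_T e^{imt} dμ(t)` for `m ∈ ℤ`. -/
def muHat1 (μ : Measure ℝ) (m : ℤ) : ℂ :=
  ∫ t, Complex.exp (Complex.I * (m : ℂ) * (t : ℂ)) ∂μ

/-- The matrix `Σ_N = (μ̂(j-k))_{1 ≤ j,k ≤ N}` (real, since `μ` is symmetric). -/
def SigmaN (μ : Measure ℝ) (N : ℕ) : Matrix (Fin N) (Fin N) ℝ :=
  fun j k => (muHat1 μ ((j.1 : ℤ) - (k.1 : ℤ))).re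

/-- `X` is a centered Gaussian vector with covariance matrix `S` (under `P`):
every linear combination of the coordinates is a centered one-dimensional
Gaussian with the corresponding variance. -/
def IsCenteredGaussianVec {ι : Type*} [Fintype ι] {Ω : Type*} [MeasurableSpace Ω]
    (P : Measure Ω) (X : ι → Ω → ℝ) (S : Matrix ι ι ℝ) : Prop :=
  ∀ u : ι → ℝ,
    P.map (fun ω => ∑ i, u i * X i ω) =
      gaussianReal 0 (Real.toNNReal (u ⬝ᵥ S.mulVec u))

open scoped ComplexConjugate

section Measure

variable {α : Type*} [MeasurableSpace α] {ν : Measure α} {b f : α → ℝ}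

-- Pointwise, `δ f - δ M 1_{b ≤ δ} ≤ b f`: off the level set `δ < b`, on it the left side is `≤ 0`.
theorem mul_integral_sub_le_integral_mul [IsFiniteMeasure ν] {M δ : ℝ} (hb : Integrable b ν)
    (hb0 : ∀ᵐ x ∂ν, 0 ≤ b x) (hf : AEStronglyMeasurable f ν) (hf0 : ∀ x, 0 ≤ f x)
    (hfM : ∀ x, f x ≤ M) (hδ : 0 ≤ δ) :
    δ * (∫ x, f x ∂ν - M * ν.real {x | b x ≤ δ}) ≤ ∫ x, b x * f x ∂ν := by
  set S := {x | b x ≤ δ}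
  have hS : NullMeasurableSet S ν := nullMeasurableSet_le hb.1.aemeasurable aemeasurable_const
  have hf_bound : ∀ᵐ x ∂ν, ‖f x‖ ≤ M := .of_forall fun x => by
    rw [Real.norm_of_nonneg (hf0 x)]; exact hfM x
  have hf_int : Integrable f ν := .of_bound hf M hf_bound
  have hind_int : Integrable (S.indicator fun _ => δ * M) ν :=
    (integrable_const _).indicator₀ hS
  calc δ * (∫ x, f x ∂ν - M * ν.real S)
      = ∫ x, (δ * f x - S.indicator (fun _ => δ * M) x) ∂ν := by
        rw [integral_sub (hf_int.const_mul δ) hind_int, integral_const_mul, integral_indicator₀ hS,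
          setIntegral_const, smul_eq_mul]
        ring
    _ ≤ ∫ x, b x * f x ∂ν := by
        refine integral_mono_ae ((hf_int.const_mul δ).sub hind_int) (hb.mul_bdd hf hf_bound) ?_
        filter_upwards [hb0] with x hbx
        by_cases hx : x ∈ S
        · have : δ * f x ≤ δ * M := mul_le_mul_of_nonneg_left (hfM x) hδ
          simp only [Set.indicator_of_mem hx]
          nlinarith [hf0 x]
        · simp only [Set.indicator_of_notMem hx, sub_zero]
          exact mul_le_mul_of_nonneg_right (not_le.mp hx).le (hf0 x)

theorem integral_mul_le_integral_withDensity_add {μs : Measure α} (hb : AEMeasurable b ν)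
    (hb0 : ∀ᵐ x ∂ν, 0 ≤ b x)
    (hf : Integrable f (ν.withDensity (fun x => ENNReal.ofReal (b x)) + μs)) (hf0 : ∀ x, 0 ≤ f x) :
    ∫ x, b x * f x ∂ν ≤ ∫ x, f x ∂(ν.withDensity (fun x => ENNReal.ofReal (b x)) + μs) := by
  obtain ⟨hf_ac, hf_s⟩ := integrable_add_measure.mp hf
  rw [integral_add_measure hf_ac hf_s, integral_withDensity_eq_integral_toReal_smul₀
    hb.ennreal_ofReal (.of_forall fun _ => ENNReal.ofReal_lt_top)]
  have hac : ∫ x, (ENNReal.ofReal (b x)).toReal • f x ∂ν = ∫ x, b x * f x ∂ν := by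
    refine integral_congr_ae ?_
    filter_upwards [hb0] with x hbx
    rw [ENNReal.toReal_ofReal hbx, smul_eq_mul]
  linarith [integral_nonneg (μ := μs) (f := f) hf0]

end Measure

theorem le_of_hasEigenvalue_of_forall_le_dotProduct_mulVec {R n : Type*} [Field R] [LinearOrder R]
    [IsStrictOrderedRing R] [Fintype n] {A : Matrix n n R} {a x : R}
    (hA : ∀ u, a * (u ⬝ᵥ u) ≤ u ⬝ᵥ A *ᵥ u) (hx : Module.End.HasEigenvalue A.mulVecLin x) :
    a ≤ x := by
  obtain ⟨v, hv⟩ := hx.exists_hasEigenvector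
  have hpos : 0 < v ⬝ᵥ v :=
    lt_of_le_of_ne (Finset.sum_nonneg fun i _ => mul_self_nonneg (v i))
      (Ne.symm (dotProduct_self_eq_zero.not.mpr hv.2))
  have hAv : A *ᵥ v = x • v := hv.apply_eq_smul
  have hav := hA v
  rw [hAv, dotProduct_smul, smul_eq_mul] at hav
  exact le_of_mul_le_mul_right hav hpos

instance isProbabilityMeasure_normLeb1 : IsProbabilityMeasure normLeb1 := by
  constructor
  have h2π : ENNReal.ofReal (2 * Real.pi) ≠ 0 := by
    simpa [ENNReal.ofReal_pos] using Real.two_pi_pos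
  simp only [normLeb1, Measure.smul_apply, Measure.restrict_apply MeasurableSet.univ,
    Set.univ_inter, Real.volume_Icc, smul_eq_mul, sub_neg_eq_add, ← two_mul]
  exact ENNReal.inv_mul_cancel h2π ENNReal.ofReal_ne_top

theorem norm_exp_I_mul_intCast_mul (m : ℤ) (t : ℝ) :
    ‖Complex.exp (Complex.I * m * t)‖ = 1 := by
  rw [Complex.norm_exp]
  simp

theorem integrable_exp_I_mul_intCast_mul (ν : Measure ℝ) [IsFiniteMeasure ν] (m : ℤ) :
    Integrable (fun t : ℝ => Complex.exp (Complex.I * m * t)) ν :=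
  .of_bound (by fun_prop) 1 (.of_forall fun t => (norm_exp_I_mul_intCast_mul m t).le)

theorem muHat1_normLeb1 (m : ℤ) : muHat1 normLeb1 m = if m = 0 then 1 else 0 := by
  split_ifs with hm
  · simp [muHat1, hm]
  have hIm : Complex.I * m ≠ 0 := mul_ne_zero Complex.I_ne_zero (Int.cast_ne_zero.mpr hm)
  have hperiod : Complex.exp (Complex.I * m * Real.pi) =
      Complex.exp (Complex.I * m * (-Real.pi : ℝ)) := by
    rw [show Complex.I * m * Real.pi =
        Complex.I * m * (-Real.pi : ℝ) + m * (2 * Real.pi * Complex.I) by push_cast; ring,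
      Complex.exp_add, Complex.exp_int_mul_two_pi_mul_I, mul_one]
  rw [muHat1, normLeb1, integral_smul_measure, integral_Icc_eq_integral_Ioc,
    ← intervalIntegral.integral_of_le (by linarith [Real.pi_pos]),
    integral_exp_mul_complex hIm, hperiod, sub_self, zero_div, smul_zero]

theorem SigmaN_normLeb1 (N : ℕ) : SigmaN normLeb1 N = 1 := by
  ext j k
  simp only [SigmaN, muHat1_normLeb1, sub_eq_zero, Nat.cast_inj, Fin.val_inj, Matrix.one_apply]
  split_ifs <;> simp

def trigPoly {N : ℕ} (u : Fin N → ℝ) (t : ℝ) : ℂ :=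
  ∑ j : Fin N, (u j : ℂ) * Complex.exp (Complex.I * ((j : ℕ) : ℤ) * t)

section TrigPoly

variable {N : ℕ} (u : Fin N → ℝ)

theorem continuous_trigPoly : Continuous (trigPoly u) := by
  unfold trigPoly
  fun_prop

theorem exp_I_mul_intCast_mul_conj (m n : ℤ) (t : ℝ) :
    Complex.exp (Complex.I * m * t) * conj (Complex.exp (Complex.I * n * t)) =
      Complex.exp (Complex.I * ((m - n : ℤ) : ℂ) * t) := by
  rw [← Complex.exp_conj, ← Complex.exp_add]
  congr 1
  simp only [map_mul, Complex.conj_I, map_intCast, Complex.conj_ofReal]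
  push_cast
  ring

theorem norm_trigPoly_sq (t : ℝ) :
    ‖trigPoly u t‖ ^ 2 = ∑ j : Fin N, ∑ k : Fin N,
      u j * u k * (Complex.exp (Complex.I * (((j : ℕ) - (k : ℕ) : ℤ) : ℂ) * t)).re := by
  rw [Complex.sq_norm, ← Complex.ofReal_re (Complex.normSq _), ← Complex.mul_conj, trigPoly,
    map_sum, Finset.sum_mul_sum, Complex.re_sum]
  refine Finset.sum_congr rfl fun j _ => ?_
  rw [Complex.re_sum]
  refine Finset.sum_congr rfl fun k _ => ?_
  rw [map_mul, Complex.conj_ofReal, mul_mul_mul_comm, exp_I_mul_intCast_mul_conj,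
    ← Complex.ofReal_mul, Complex.re_ofReal_mul]

theorem norm_trigPoly_sq_le (t : ℝ) : ‖trigPoly u t‖ ^ 2 ≤ N * (u ⬝ᵥ u) := by
  have hnorm : ‖trigPoly u t‖ ≤ ∑ j, |u j| := by
    refine (norm_sum_le _ _).trans (Finset.sum_le_sum fun j _ => ?_)
    rw [norm_mul, norm_exp_I_mul_intCast_mul, mul_one, Complex.norm_real, Real.norm_eq_abs]
  calc ‖trigPoly u t‖ ^ 2 ≤ (∑ j, |u j|) ^ 2 := pow_le_pow_left₀ (norm_nonneg _) hnorm 2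
    _ ≤ N * ∑ j, |u j| ^ 2 := by
        simpa using sq_sum_le_card_mul_sum_sq (s := Finset.univ) (f := fun j => |u j|)
    _ = N * (u ⬝ᵥ u) := by simp [dotProduct, sq]

theorem integrable_norm_trigPoly_sq (ν : Measure ℝ) [IsFiniteMeasure ν] :
    Integrable (fun t => ‖trigPoly u t‖ ^ 2) ν :=
  .of_bound ((continuous_trigPoly u).norm.pow 2).aestronglyMeasurable (N * (u ⬝ᵥ u))
    (.of_forall fun t => by
      rw [Real.norm_of_nonneg (by positivity)]; exact norm_trigPoly_sq_le u t)

theorem dotProduct_SigmaN_mulVec (ν : Measure ℝ) [IsFiniteMeasure ν] :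
    u ⬝ᵥ SigmaN ν N *ᵥ u = ∫ t, ‖trigPoly u t‖ ^ 2 ∂ν := by
  have hint (j k : Fin N) : Integrable (fun t : ℝ => u j * u k *
      (Complex.exp (Complex.I * (((j : ℕ) - (k : ℕ) : ℤ) : ℂ) * t)).re) ν :=
    (integrable_exp_I_mul_intCast_mul ν _).re.const_mul _
  simp only [norm_trigPoly_sq]
  rw [integral_finsetSum _ fun j _ => integrable_finsetSum _ fun k _ => hint j k]
  simp only [dotProduct, mulVec, SigmaN, muHat1, Finset.mul_sum]
  refine Finset.sum_congr rfl fun j _ => ?_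
  rw [integral_finsetSum _ fun k _ => hint j k]
  refine Finset.sum_congr rfl fun k _ => ?_
  rw [integral_const_mul, ← RCLike.re_to_complex,
    ← integral_re (integrable_exp_I_mul_intCast_mul ν _)]
  simp only [RCLike.re_to_complex]
  ring

theorem integral_norm_trigPoly_sq_normLeb1 : ∫ t, ‖trigPoly u t‖ ^ 2 ∂normLeb1 = u ⬝ᵥ u := by
  rw [← dotProduct_SigmaN_mulVec, SigmaN_normLeb1, one_mulVec]

end TrigPoly

theorem mul_one_sub_mul_dotProduct_le_dotProduct_SigmaN_mulVec {μ μs : Measure ℝ}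
    [IsFiniteMeasure μ] {b : ℝ → ℝ} (hb : Integrable b normLeb1)
    (hb0 : ∀ᵐ t ∂normLeb1, 0 ≤ b t)
    (hμ : μ = normLeb1.withDensity (fun t => ENNReal.ofReal (b t)) + μs) {δ : ℝ} (hδ : 0 ≤ δ)
    {N : ℕ} (u : Fin N → ℝ) :
    δ * (1 - N * normLeb1.real {t | b t ≤ δ}) * (u ⬝ᵥ u) ≤ u ⬝ᵥ SigmaN μ N *ᵥ u := by
  subst hμ
  calc δ * (1 - N * normLeb1.real {t | b t ≤ δ}) * (u ⬝ᵥ u)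
      = δ * (∫ t, ‖trigPoly u t‖ ^ 2 ∂normLeb1 -
          N * (u ⬝ᵥ u) * normLeb1.real {t | b t ≤ δ}) := by
        rw [integral_norm_trigPoly_sq_normLeb1]; ring
    _ ≤ ∫ t, b t * ‖trigPoly u t‖ ^ 2 ∂normLeb1 :=
        mul_integral_sub_le_integral_mul hb hb0
          ((continuous_trigPoly u).norm.pow 2).aestronglyMeasurable (fun t => by positivity)
          (norm_trigPoly_sq_le u) hδ
    _ ≤ ∫ t, ‖trigPoly u t‖ ^ 2 ∂(normLeb1.withDensity (fun t => ENNReal.ofReal (b t)) + μs) :=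
        integral_mul_le_integral_withDensity_add hb.1.aemeasurable hb0
          (integrable_norm_trigPoly_sq u _) (fun t => by positivity)
    _ = _ := (dotProduct_SigmaN_mulVec u _).symm

theorem min_mul_rpow_neg_one_div_le {K a n p : ℝ} (hK : 0 ≤ K) (ha : 0 ≤ a) (hn : 1 ≤ n)
    (hp : 0 < p) : min K (a ^ (-1 / p)) * n ^ (-1 / p) ≤ min K ((a * n) ^ (-1 / p)) := by
  have hn_rpow : n ^ (-1 / p) ≤ 1 :=
    Real.rpow_le_one_of_one_le_of_nonpos hn (div_nonpos_of_nonpos_of_nonneg (by norm_num) hp.le)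
  have hn_rpow_nonneg : 0 ≤ n ^ (-1 / p) := by positivity
  refine le_min ?_ ?_
  · exact (mul_le_of_le_one_right (le_min hK (by positivity)) hn_rpow).trans (min_le_left _ _)
  · rw [Real.mul_rpow ha (by linarith)]
    exact mul_le_mul_of_nonneg_right (min_le_right _ _) hn_rpow_nonneg

theorem rpow_le_inv_of_le_rpow_neg_one_div {δ a p : ℝ} (hδ : 0 ≤ δ) (ha : 0 ≤ a) (hp : 0 < p)
    (h : δ ≤ a ^ (-1 / p)) : δ ^ p ≤ a⁻¹ := by
  calc δ ^ p ≤ (a ^ (-1 / p)) ^ p := Real.rpow_le_rpow hδ h hp.le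
    _ = a⁻¹ := by rw [← Real.rpow_mul ha, div_mul_cancel₀ _ hp.ne', Real.rpow_neg_one]

/-- If `λ{t : b(t) ≤ δ} ≤ C δ^p` for all `δ ∈ [0,π]`, then there
is a constant `c > 0` depending only on `C` and `p` such that for all `N ≥ 1` the
smallest eigenvalue of `Σ_N` is at least `c N^{-1/p}`. -/
theorem smallest_eigenvalue_polynomial_lower_bound
    (p C : ℝ) (hp : 0 < p) :
    ∃ c : ℝ, 0 < c ∧
      ∀ (μ μs : Measure ℝ) (b : ℝ → ℝ),
        IsFiniteMeasure μ →
        μ {t : ℝ | ¬ |t| ≤ Real.pi} = 0 →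
        μ.map (fun t => -t) = μ →
        Integrable b normLeb1 →
        (∀ᵐ t ∂normLeb1, 0 ≤ b t) →
        μs.MutuallySingular normLeb1 →
        μ = normLeb1.withDensity (fun t => ENNReal.ofReal (b t)) + μs →
        (∀ δ : ℝ, 0 ≤ δ → δ ≤ Real.pi →
          normLeb1 {t : ℝ | b t ≤ δ} ≤ ENNReal.ofReal (C * δ ^ p)) →
        ∀ N : ℕ, 1 ≤ N →
          ∀ x : ℝ, Module.End.HasEigenvalue (Matrix.mulVecLin (SigmaN μ N)) x →
            c * (N : ℝ) ^ (-1 / p) ≤ x := by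
  set C₀ := max C 1
  have hC₀ : 0 < C₀ := lt_of_lt_of_le one_pos (le_max_right _ _)
  refine ⟨min Real.pi ((2 * C₀) ^ (-1 / p)) / 2, by positivity, ?_⟩
  rintro μ μs b _ - - hb hb0 - hμ hlevel N hN x hx
  -- `δ` is chosen so that the level set `{b ≤ δ}` has measure at most `1 / (2N)`.
  set δ := min Real.pi ((2 * C₀ * N) ^ (-1 / p))
  have hδ : 0 < δ := lt_min Real.pi_pos (by positivity)
  have hδ_level : N * normLeb1.real {t | b t ≤ δ} ≤ 1 / 2 := by
    have hmeas : normLeb1.real {t | b t ≤ δ} ≤ C₀ * δ ^ p :=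
      ENNReal.toReal_le_of_le_ofReal (by positivity) ((hlevel δ hδ.le (min_le_left _ _)).trans
        (ENNReal.ofReal_le_ofReal (by gcongr; exact le_max_left _ _)))
    have hδp := rpow_le_inv_of_le_rpow_neg_one_div hδ.le (by positivity) hp (min_le_right _ _)
    calc N * normLeb1.real {t | b t ≤ δ} ≤ N * (C₀ * (2 * C₀ * N)⁻¹) := by
          gcongr; exact hmeas.trans (by gcongr)
      _ = 1 / 2 := by field_simp
  refine le_of_hasEigenvalue_of_forall_le_dotProduct_mulVec (fun u => ?_) hx
  refine le_trans ?_ (mul_one_sub_mul_dotProduct_le_dotProduct_SigmaN_mulVec hb hb0 hμ hδ.le u)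
  have hcδ := min_mul_rpow_neg_one_div_le Real.pi_pos.le (by positivity : 0 ≤ 2 * C₀)
    (Nat.one_le_cast.mpr hN) hp
  have huu : 0 ≤ u ⬝ᵥ u := Finset.sum_nonneg fun i _ => mul_self_nonneg (u i)
  refine mul_le_mul_of_nonneg_right ?_ huu
  nlinarith [mul_le_mul_of_nonneg_left hδ_level hδ.le]
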